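/- arXiv:1810.10078 — 3 statements merged into one kernel-verified Lean document; each statement's English description precedes it below -/
import Mathlib

section
/- Let W ∈ ℝ^{F×K} have rank K ≤ F, and let 𝒦 ⊆ [F] be an index set with |𝒦| = K such that the K×K submatrix W_𝒦 (rows of W indexed by 𝒦) is invertible. Let α ∈ ℝ^K be any vector and set M₂ = W Diag(α) Wᵀ. Define R ∈ ℝ^{K×(F−K)} by Rᵀ = W_{𝒦ᶜ} (W_𝒦)^{-1}, where W_{𝒦ᶜ} denotes the rows of W with indices not in 𝒦. Let Π be the permutation matrix corresponding to 𝒦 and X* := Π [[I, R],[0, 0]] Π. Then M₂ = M₂ X*. -/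
/-!
The columns of `Wᵀ` indexed by `𝒦ᶜ` are those indexed by `𝒦` multiplied by `R`, since
`W_𝒦ᵀ R = (Rᵀ W_𝒦)ᵀ = W_{𝒦ᶜ}ᵀ`. Multiplying on the right by `X*` replaces the `𝒦ᶜ` columns
of `Wᵀ` by exactly these products, so `Wᵀ X* = Wᵀ`, and hence `M₂ X* = W Diag(α) Wᵀ X* = M₂`.
-/

open Matrix

namespace Matrix

variable {k n p m α : Type*} [Fintype n] [DecidableEq n]

theorem transpose_mul_eq_transpose_of_transpose_eq_mul_inv [CommRing α]
    {A : Matrix n n α} {B : Matrix p n α} {R : Matrix n p α} (hA : IsUnit A.det)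
    (hR : Rᵀ = B * A⁻¹) : Aᵀ * R = Bᵀ := by
  calc Aᵀ * R = (Rᵀ * A)ᵀ := by rw [transpose_mul, transpose_transpose]
    _ = Bᵀ := by rw [hR, nonsing_inv_mul_cancel_right A B hA]

-- Without the ascription, `*` elaborates through the `CStarMatrix` default instance.
theorem fromCols_mul_fromBlocks_one_zero [Fintype p] [Semiring α]
    {A : Matrix k n α} {B : Matrix k p α} {R : Matrix n p α} (h : A * R = B) :
    fromCols A B * (fromBlocks 1 R 0 0 : Matrix (n ⊕ p) (n ⊕ p) α) = fromCols A B := by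
  rw [fromCols_mul_fromBlocks, h]
  simp

theorem transpose_mul_submatrix_fromBlocks_one_zero [Fintype p] [Fintype m] [Semiring α]
    {W : Matrix m k α} (e : m ≃ n ⊕ p) {R : Matrix n p α}
    (h : (W.submatrix (e.symm ∘ Sum.inl) id)ᵀ * R = (W.submatrix (e.symm ∘ Sum.inr) id)ᵀ) :
    Wᵀ * (fromBlocks 1 R 0 0 : Matrix (n ⊕ p) (n ⊕ p) α).submatrix e e = Wᵀ := by
  have hW : Wᵀ = (fromCols (W.submatrix (e.symm ∘ Sum.inl) id)ᵀ
      (W.submatrix (e.symm ∘ Sum.inr) id)ᵀ).submatrix id e := by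
    ext j i
    obtain ⟨s, rfl⟩ := e.symm.surjective i
    rcases s with l | r <;> simp
  rw [hW, submatrix_mul_equiv, fromCols_mul_fromBlocks_one_zero h]

end Matrix

theorem M2_eq_M2_mul_Xstar_general {F K Fc : ℕ} (W : Matrix (Fin F) (Fin K) ℝ)
    (e : Fin F ≃ (Fin K ⊕ Fin Fc))
    (WK : Matrix (Fin K) (Fin K) ℝ) (hWK : WK = fun k j => W (e.symm (Sum.inl k)) j)
    (hWKu : IsUnit WK)
    (Wc : Matrix (Fin Fc) (Fin K) ℝ) (hWc : Wc = fun c j => W (e.symm (Sum.inr c)) j)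
    (R : Matrix (Fin K) (Fin Fc) ℝ) (hR : Rᵀ = Wc * WK⁻¹)
    (α : Fin K → ℝ)
    (M2 : Matrix (Fin F) (Fin F) ℝ) (hM2 : M2 = W * Matrix.diagonal α * Wᵀ)
    (Xstar : Matrix (Fin F) (Fin F) ℝ)
    (hX : Xstar = (Matrix.fromBlocks 1 R 0 0).submatrix e e) :
    M2 = M2 * Xstar := by
  have hRK : WKᵀ * R = Wcᵀ :=
    transpose_mul_eq_transpose_of_transpose_eq_mul_inv ((isUnit_iff_isUnit_det WK).mp hWKu) hR
  subst hWK hWc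
  have hWX : Wᵀ * Xstar = Wᵀ := hX ▸ transpose_mul_submatrix_fromBlocks_one_zero e hRK
  rw [hM2, Matrix.mul_assoc _ Wᵀ, hWX]

/-- M₂ = M₂ X* where X* = Π [[I, R],[0,0]] Π.  The permutation Π that puts the rows
indexed by 𝒦 first is encoded by an equivalence `e : Fin F ≃ Fin K ⊕ Fin Fc`:
the index set 𝒦 is the preimage of the left summand, `W_𝒦 k j = W (e.symm (inl k)) j`,
and conjugation by Π corresponds to `submatrix e e`. -/
theorem M2_eq_M2_mul_Xstar {F K Fc : ℕ} (W : Matrix (Fin F) (Fin K) ℝ)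
    (hrank : W.rank = K)
    (e : Fin F ≃ (Fin K ⊕ Fin Fc))
    (WK : Matrix (Fin K) (Fin K) ℝ) (hWK : WK = fun k j => W (e.symm (Sum.inl k)) j)
    (hWKu : IsUnit WK)
    (Wc : Matrix (Fin Fc) (Fin K) ℝ) (hWc : Wc = fun c j => W (e.symm (Sum.inr c)) j)
    (R : Matrix (Fin K) (Fin Fc) ℝ) (hR : Rᵀ = Wc * WK⁻¹)
    (α : Fin K → ℝ)
    (M2 : Matrix (Fin F) (Fin F) ℝ) (hM2 : M2 = W * Matrix.diagonal α * Wᵀ)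
    (Xstar : Matrix (Fin F) (Fin F) ℝ)
    (hX : Xstar = (Matrix.fromBlocks 1 R 0 0).submatrix e e) :
    M2 = M2 * Xstar :=
  M2_eq_M2_mul_Xstar_general W e WK hWK hWKu Wc hWc R hR α M2 hM2 Xstar hX
end

section
/- Let data matrix V ∈ ℝ^{F×N} with columns v_n, and define p_n = Σ_f v_{f,n}, q_n = p_n². Let [M̂₄]_{ijlm} = (1/N)Σ_n v_{i,n}v_{j,n}v_{l,n}v_{m,n} − [T̂]_{ijlm}, where [T̂]_{ijlm} = (1/N²)(Σ_n v_{i,n}v_{j,n})(Σ_n v_{l,n}v_{m,n}) + (1/N²)(Σ_n v_{i,n}v_{l,n})(Σ_n v_{j,n}v_{m,n}) + (1/N²)(Σ_n v_{i,n}v_{m,n})(Σ_n v_{j,n}v_{l,n}). Then the matrix M̂₂ with entries [M̂₂]_{ij} = Σ_{l,m} [M̂₄]_{ijlm} satisfies M̂₂ = (1/N) V Diag(q) Vᵀ − ((Σ_n q_n)/N²) V Vᵀ − (2/N²) V p pᵀ Vᵀ, where p = (p_1,…,p_N)ᵀ, q = (q_1,…,q_N)ᵀ. -/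
open Matrix Finset

/-! Every term of `M̂₄` is a sum over `n` of a product in which `l` and `m` each occur in a single
factor, so summing over `l` (or `m`) just replaces `V l n` by the column sum `p n`. The fourth-order
term becomes `Σ_n v_{i,n} v_{j,n} p_n²`, the first term of `T̂` becomes `[VVᵀ]_{ij} Σ_n p_n²`, and
the two other terms of `T̂` each become `[Vp]_i [Vp]_j`. -/

theorem mul_diagonal_mul_transpose_apply {ι κ R : Type*} [Fintype κ] [DecidableEq κ]
    [CommSemiring R] (V : Matrix ι κ R) (d : κ → R) (i j : ι) :
    (V * diagonal d * Vᵀ) i j = ∑ n, V i n * V j n * d n := by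
  simp only [mul_apply (M := V * diagonal d), mul_diagonal, transpose_apply, mul_right_comm]

section ColumnSums

variable {ι κ R : Type*} [Fintype ι] [Fintype κ] [CommSemiring R] (V : Matrix ι κ R)

theorem sum_sum_sum_mul_mul_eq_sum_mul_sq (c : κ → R) :
    ∑ l, ∑ m, ∑ n, c n * V l n * V m n = ∑ n, c n * (∑ f, V f n) ^ 2 := by
  calc ∑ l, ∑ m, ∑ n, c n * V l n * V m n
      = ∑ n, ∑ l, ∑ m, c n * V l n * V m n := by
        simp_rw [sum_comm (s := (univ : Finset ι)) (t := (univ : Finset κ))]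
    _ = ∑ n, c n * (∑ f, V f n) ^ 2 := by
        refine sum_congr rfl fun n _ => ?_
        simp_rw [sq, sum_mul_sum, mul_sum, mul_assoc]

theorem sum_sum_sum_mul_eq_sum_sq :
    ∑ l, ∑ m, ∑ n, V l n * V m n = ∑ n, (∑ f, V f n) ^ 2 := by
  simpa using sum_sum_sum_mul_mul_eq_sum_mul_sq V 1

theorem sum_sum_mul_eq_mulVec (a : ι) :
    ∑ m, ∑ n, V a n * V m n = (V *ᵥ fun n => ∑ f, V f n) a := by
  rw [sum_comm]
  simp only [mulVec, dotProduct, mul_sum]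

theorem sum_sum_sum_mul_sum_eq_mulVec_mul_mulVec (a b : ι) :
    ∑ l, ∑ m, (∑ n, V a n * V l n) * (∑ n, V b n * V m n) =
      (V *ᵥ fun n => ∑ f, V f n) a * (V *ᵥ fun n => ∑ f, V f n) b := by
  rw [← sum_mul_sum, sum_sum_mul_eq_mulVec, sum_sum_mul_eq_mulVec]

end ColumnSums

/-- Efficient computation of the empirical second moment:
M̂₂ = (1/N) V Diag(q) Vᵀ − ((Σ_n q_n)/N²) V Vᵀ − (2/N²) (Vp)(Vp)ᵀ. -/
theorem M2hat_formula {F N : ℕ} (V : Matrix (Fin F) (Fin N) ℝ)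
    (p : Fin N → ℝ) (hp : ∀ n, p n = ∑ f, V f n)
    (q : Fin N → ℝ) (hq : ∀ n, q n = (p n) ^ 2)
    (That : Fin F → Fin F → Fin F → Fin F → ℝ)
    (hThat : ∀ i j l m, That i j l m =
      (∑ n, V i n * V j n) * (∑ n, V l n * V m n) / (N : ℝ) ^ 2 +
      (∑ n, V i n * V l n) * (∑ n, V j n * V m n) / (N : ℝ) ^ 2 +
      (∑ n, V i n * V m n) * (∑ n, V j n * V l n) / (N : ℝ) ^ 2)
    (M4hat : Fin F → Fin F → Fin F → Fin F → ℝ)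
    (hM4hat : ∀ i j l m, M4hat i j l m =
      (∑ n, V i n * V j n * V l n * V m n) / (N : ℝ) - That i j l m)
    (M2hat : Matrix (Fin F) (Fin F) ℝ)
    (hM2hat : ∀ i j, M2hat i j = ∑ l, ∑ m, M4hat i j l m) :
    M2hat = ((N : ℝ)⁻¹) • (V * Matrix.diagonal q * Vᵀ)
      - ((∑ n, q n) / (N : ℝ) ^ 2) • (V * Vᵀ)
      - (2 / (N : ℝ) ^ 2) • Matrix.vecMulVec (V.mulVec p) (V.mulVec p) := by
  obtain rfl : p = fun n => ∑ f, V f n := funext hp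
  obtain rfl : q = fun n => (∑ f, V f n) ^ 2 := funext hq
  ext i j
  have hfourth : ∑ l, ∑ m, ∑ n, V i n * V j n * V l n * V m n =
      (V * diagonal (fun n => (∑ f, V f n) ^ 2) * Vᵀ) i j := by
    rw [sum_sum_sum_mul_mul_eq_sum_mul_sq V (fun n => V i n * V j n),
      mul_diagonal_mul_transpose_apply]
  have hij : ∑ l, ∑ m, (∑ n, V i n * V j n) * (∑ n, V l n * V m n) =
      (V * Vᵀ) i j * ∑ n, (∑ f, V f n) ^ 2 := by
    simp_rw [← mul_sum, sum_sum_sum_mul_eq_sum_sq, mul_apply, transpose_apply]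
  have hil := sum_sum_sum_mul_sum_eq_mulVec_mul_mulVec V i j
  have him : ∑ l, ∑ m, (∑ n, V i n * V m n) * (∑ n, V j n * V l n) =
      (V *ᵥ fun n => ∑ f, V f n) i * (V *ᵥ fun n => ∑ f, V f n) j := by
    rw [sum_comm, hil]
  rw [hM2hat]
  simp only [hM4hat, hThat, sum_sub_distrib, sum_add_distrib, ← sum_div, hfourth, hij, hil, him]
  simp only [Matrix.sub_apply, Matrix.smul_apply, vecMulVec_apply, smul_eq_mul]
  ring
end

section
/- Let Ȳ, L ∈ ℝ^{m×n}, Y = Ȳ + L, S ⊆ [n] with Ȳ_Sᵀ Ȳ_S invertible, D_max = ‖(Ȳ_Sᵀ Ȳ_S)^{-1}‖_∞, and suppose ‖Ȳ_{Sᶜ}ᵀ Ȳ_S (Ȳ_Sᵀ Ȳ_S)^{-1}‖_∞ ≤ 1 − γ for some γ ∈ (0,1]. Let U_L = max(‖L‖₁, ‖L‖_∞), U_Ȳ = max(‖Ȳ‖₁, ‖Ȳ‖_∞), and η = ‖(Ȳ_SᵀȲ_S)^{-1}(L_SᵀY_S + Y_SᵀL_S + L_SᵀL_S)‖_∞. If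 η < 1 and D_max · U_L · (2U_Ȳ + U_L) · [1 + (U_Ȳ + U_L)² D_max/(1−η)] ≤ γ/2, then ‖Y_{Sᶜ}ᵀ Y_S (Y_Sᵀ Y_S)^{-1}‖_∞ ≤ 1 − γ/2. -/
open Matrix NNReal

/-- Matrix ∞-norm: maximum absolute row sum. -/
noncomputable def infNorm {α β : Type*} [Fintype α] [Fintype β] (A : Matrix α β ℝ) : ℝ :=
  ⨆ i, ∑ j, |A i j|

/-- Matrix 1-norm: maximum absolute column sum. -/
noncomputable def oneNorm {α β : Type*} [Fintype α] [Fintype β] (A : Matrix α β ℝ) : ℝ :=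
  ⨆ j, ∑ i, |A i j|

/-- The submatrix of columns of `A` indexed by the finite set `S`. -/
def colsub {m n : ℕ} (A : Matrix (Fin m) (Fin n) ℝ) (S : Finset (Fin n)) :
    Matrix (Fin m) {j // j ∈ S} ℝ :=
  A.submatrix id (fun j => (j : Fin n))

section norms
attribute [local instance] Matrix.linftyOpSeminormedAddCommGroup

lemma infNorm_eq_norm {α β : Type*} [Fintype α] [Fintype β] (A : Matrix α β ℝ) :
    infNorm A = ‖A‖ := by
  rw [Matrix.linfty_opNorm_def, infNorm]
  rcases isEmpty_or_nonempty α with h | h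
  · simp [Finset.univ_eq_empty]
  · have hfun : (fun i : α => ∑ j : β, |A i j|)
        = ((fun x : ℝ≥0 => (x : ℝ)) ∘ fun i : α => ∑ j : β, ‖A i j‖₊) := by
      ext i
      simp [NNReal.coe_sum, Real.norm_eq_abs, Function.comp]
    rw [← Finset.sup'_eq_sup (Finset.univ_nonempty) (fun i : α => ∑ j : β, ‖A i j‖₊),
      ← Finset.sup'_univ_eq_ciSup, hfun,
      Finset.comp_sup'_eq_sup'_comp Finset.univ_nonempty
        (fun x : ℝ≥0 => (x : ℝ)) (fun x y => by
          exact NNReal.coe_mono.map_max)]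

lemma infNorm_nonneg {α β : Type*} [Fintype α] [Fintype β] (A : Matrix α β ℝ) :
    0 ≤ infNorm A := by rw [infNorm_eq_norm]; exact norm_nonneg _

lemma oneNorm_nonneg {α β : Type*} [Fintype α] [Fintype β] (A : Matrix α β ℝ) :
    0 ≤ oneNorm A := infNorm_nonneg Aᵀ

lemma infNorm_mul_le {α β γ : Type*} [Fintype α] [Fintype β] [Fintype γ]
    (A : Matrix α β ℝ) (B : Matrix β γ ℝ) : infNorm (A * B) ≤ infNorm A * infNorm B := by
  simp only [infNorm_eq_norm]; exact Matrix.linfty_opNorm_mul A B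

lemma infNorm_add_le {α β : Type*} [Fintype α] [Fintype β] (A B : Matrix α β ℝ) :
    infNorm (A + B) ≤ infNorm A + infNorm B := by
  simp only [infNorm_eq_norm]; exact norm_add_le A B

lemma infNorm_zero {α β : Type*} [Fintype α] [Fintype β] :
    infNorm (0 : Matrix α β ℝ) = 0 := by
  rw [infNorm_eq_norm]; exact norm_zero

lemma infNorm_sub_le {α β : Type*} [Fintype α] [Fintype β] (A B : Matrix α β ℝ) :
    infNorm (A - B) ≤ infNorm A + infNorm B := by
  simp only [infNorm_eq_norm]; exact norm_sub_le A B

end norms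

lemma infNorm_mul_le_of_le {α β γ : Type*} [Fintype α] [Fintype β] [Fintype γ]
    {A : Matrix α β ℝ} {B : Matrix β γ ℝ} {a b : ℝ}
    (h1 : infNorm A ≤ a) (h2 : infNorm B ≤ b) : infNorm (A * B) ≤ a * b :=
  le_trans (infNorm_mul_le A B)
    (mul_le_mul h1 h2 (infNorm_nonneg B) (le_trans (infNorm_nonneg A) h1))

lemma infNorm_one {σ : Type*} [Fintype σ] [DecidableEq σ] [Nonempty σ] :
    infNorm (1 : Matrix σ σ ℝ) = 1 := by
  rw [infNorm]
  have h : ∀ i : σ, ∑ j, |(1 : Matrix σ σ ℝ) i j| = 1 := by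
    intro i
    simp [Matrix.one_apply, apply_ite abs]
  simp only [h]
  exact ciSup_const

lemma infNorm_colsub_le {m n : ℕ} (A : Matrix (Fin m) (Fin n) ℝ) (S : Finset (Fin n)) :
    infNorm (colsub A S) ≤ infNorm A := by
  apply Real.iSup_le _ (infNorm_nonneg A)
  intro i
  have h1 : ∑ j : {j // j ∈ S}, |colsub A S i j| = ∑ j ∈ S, |A i j| := by
    rw [← Finset.sum_coe_sort S (fun j => |A i j|)]
    rfl
  rw [h1]
  calc ∑ j ∈ S, |A i j| ≤ ∑ j : Fin n, |A i j| :=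
        Finset.sum_le_sum_of_subset_of_nonneg (Finset.subset_univ S)
          (fun j _ _ => abs_nonneg _)
    _ ≤ infNorm A := by
        rw [infNorm]
        exact le_ciSup (f := fun i : Fin m => ∑ j : Fin n, |A i j|)
          (Set.Finite.bddAbove (Set.finite_range _)) i

lemma infNorm_colsub_transpose_le {m n : ℕ} (A : Matrix (Fin m) (Fin n) ℝ)
    (S : Finset (Fin n)) : infNorm (colsub A S)ᵀ ≤ oneNorm A := by
  apply Real.iSup_le _ (oneNorm_nonneg A)
  intro j
  have h1 : ∑ i, |(colsub A S)ᵀ j i| = ∑ i, |A i (j : Fin n)| := rfl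
  rw [h1, oneNorm]
  exact le_ciSup (f := fun j : Fin n => ∑ i : Fin m, |A i j|)
    (Set.Finite.bddAbove (Set.finite_range _)) (j : Fin n)

lemma arith_c1 {d UL UY : ℝ} (hUL0 : 0 ≤ UL) (hUY0 : 0 ≤ UY) (hd0 : 0 ≤ d)
    (h : 1 ≤ d * (UY * UY)) : 1 ≤ (UY + UL) ^ 2 * d := by
  nlinarith [mul_nonneg (mul_nonneg hd0 hUL0) hUL0, mul_nonneg (mul_nonneg hd0 hUY0) hUL0]

set_option maxHeartbeats 1000000 in
lemma arith_main (γ η Dmax UL UY z t eE β e : ℝ)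
    (hγ0 : 0 < γ) (hγ1 : γ ≤ 1) (hη0 : 0 ≤ η) (hη1 : η < 1)
    (hd0 : 0 ≤ Dmax) (hUL0 : 0 ≤ UL) (hUY0 : 0 ≤ UY)
    (he : e = UL * (2 * UY + UL))
    (hc1 : 1 ≤ (UY + UL) ^ 2 * Dmax)
    (hsmall : Dmax * UL * (2 * UY + UL) * (1 + (UY + UL) ^ 2 * Dmax / (1 - η)) ≤ γ / 2)
    (hz1 : z ≤ 1 - γ) (hz0 : 0 ≤ z) (hte : t ≤ e) (ht0 : 0 ≤ t)
    (heE : eE ≤ e) (heE0 : 0 ≤ eE) (hβ0 : 0 ≤ β)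
    (hβ : β ≤ Dmax + Dmax * t * β) :
    z + (eE * β + z * (t * β)) ≤ 1 - γ / 2 := by
  set c : ℝ := (UY + UL) ^ 2 * Dmax with hc
  set q : ℝ := Dmax * e with hq
  have he0 : 0 ≤ e := by rw [he]; positivity
  have hc0 : 0 ≤ c := le_trans zero_le_one hc1
  have hq0 : 0 ≤ q := mul_nonneg hd0 he0
  have h1η : 0 < 1 - η := by linarith
  have hcd : c ≤ c / (1 - η) := by
    rw [le_div_iff₀ h1η]
    nlinarith [mul_nonneg hc0 hη0]
  have hqc : q * (1 + c) ≤ γ / 2 := by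
    have h1 : q * (1 + c) ≤ q * (1 + c / (1 - η)) := by
      have := mul_le_mul_of_nonneg_left (by linarith : 1 + c ≤ 1 + c / (1 - η)) hq0
      linarith
    have h2 : q * (1 + c / (1 - η))
        = Dmax * UL * (2 * UY + UL) * (1 + (UY + UL) ^ 2 * Dmax / (1 - η)) := by
      rw [hq, he, hc, mul_div_assoc]
      ring
    linarith
  have h2q : 2 * q ≤ γ / 2 := by
    nlinarith [mul_nonneg hq0 (by linarith : (0:ℝ) ≤ c - 1)]
  have hu : e * β ≤ q + q * (e * β) := by
    have h1 : e * β ≤ e * (Dmax + Dmax * t * β) := mul_le_mul_of_nonneg_left hβ he0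
    have h3 : t * β ≤ e * β := mul_le_mul_of_nonneg_right hte hβ0
    have h2 : e * (Dmax * t * β) ≤ e * (Dmax * e * β) := by
      nlinarith [mul_le_mul_of_nonneg_left h3 (mul_nonneg he0 hd0)]
    nlinarith [h1, h2]
  have hu0 : 0 ≤ e * β := mul_nonneg he0 hβ0
  have key : (2 - γ) * (e * β) ≤ γ / 2 := by
    nlinarith [mul_nonneg hu0 (by linarith : (0:ℝ) ≤ γ - 2 * q)]
  have h4 : eE * β ≤ e * β := mul_le_mul_of_nonneg_right heE hβ0
  have h5 : z * (t * β) ≤ (1 - γ) * (e * β) := by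
    have h3 : t * β ≤ e * β := mul_le_mul_of_nonneg_right hte hβ0
    exact mul_le_mul hz1 h3 (mul_nonneg ht0 hβ0) (by linarith)
  nlinarith [key, h4, h5, hz1, hu0]

set_option maxHeartbeats 1000000 in
/-- Stability of the irrepresentability condition under perturbation: if
‖Ȳ_{Sᶜ}ᵀ Ȳ_S (Ȳ_Sᵀ Ȳ_S)^{-1}‖_∞ ≤ 1 − γ and the perturbation L is small enough in the
stated sense, then ‖Y_{Sᶜ}ᵀ Y_S (Y_Sᵀ Y_S)^{-1}‖_∞ ≤ 1 − γ/2 for Y = Ȳ + L. -/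
theorem irrepresentability_stable {m n : ℕ}
    (Ybar L Y : Matrix (Fin m) (Fin n) ℝ) (hY : Y = Ybar + L)
    (S : Finset (Fin n))
    (hinv : IsUnit ((colsub Ybar S)ᵀ * colsub Ybar S))
    (Dmax : ℝ) (hD : Dmax = infNorm ((colsub Ybar S)ᵀ * colsub Ybar S)⁻¹)
    (γ : ℝ) (hγ0 : 0 < γ) (hγ1 : γ ≤ 1)
    (hirr : infNorm ((colsub Ybar Sᶜ)ᵀ * colsub Ybar S *
      ((colsub Ybar S)ᵀ * colsub Ybar S)⁻¹) ≤ 1 - γ)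
    (UL : ℝ) (hUL : UL = max (oneNorm L) (infNorm L))
    (UY : ℝ) (hUY : UY = max (oneNorm Ybar) (infNorm Ybar))
    (η : ℝ)
    (hη : η = infNorm (((colsub Ybar S)ᵀ * colsub Ybar S)⁻¹ *
      ((colsub L S)ᵀ * colsub Y S + (colsub Y S)ᵀ * colsub L S +
        (colsub L S)ᵀ * colsub L S)))
    (hη1 : η < 1)
    (hsmall : Dmax * UL * (2 * UY + UL) * (1 + (UY + UL) ^ 2 * Dmax / (1 - η)) ≤ γ / 2) :
    infNorm ((colsub Y Sᶜ)ᵀ * colsub Y S * ((colsub Y S)ᵀ * colsub Y S)⁻¹) ≤ 1 - γ / 2 := by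
  -- abbreviations
  set As := colsub Ybar S with hAs
  set Ls := colsub L S with hLs
  set Ys := colsub Y S with hYsdef
  set Asc := colsub Ybar Sᶜ with hAsc
  set Lsc := colsub L Sᶜ with hLscdef
  set Ysc := colsub Y Sᶜ with hYscdef
  have hYs : Ys = As + Ls := by
    ext i j; simp [hYsdef, hAs, hLs, colsub, hY]
  have hYsc : Ysc = Asc + Lsc := by
    ext i j; simp [hYscdef, hAsc, hLscdef, colsub, hY]
  set A := Asᵀ * As with hAdef
  set B := Ysᵀ * Ys with hBdef
  set P := A⁻¹ with hPdef
  set Q := B⁻¹ with hQdef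
  clear_value As Ls Ys Asc Lsc Ysc A B P Q
  -- basic nonnegativity
  have hUL0 : 0 ≤ UL := le_trans (oneNorm_nonneg L) (by rw [hUL]; exact le_max_left _ _)
  have hUY0 : 0 ≤ UY := le_trans (oneNorm_nonneg Ybar) (by rw [hUY]; exact le_max_left _ _)
  have hd0 : 0 ≤ Dmax := by rw [hD]; exact infNorm_nonneg _
  have hη0 : 0 ≤ η := by rw [hη]; exact infNorm_nonneg _
  -- the trivial case where S is empty
  rcases isEmpty_or_nonempty {j // j ∈ S} with hS | hS
  · have h0 : infNorm (Yscᵀ * Ys * Q) ≤ 0 := by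
      apply Real.iSup_le _ le_rfl
      intro i
      simp [Finset.univ_eq_empty]
    linarith
  -- the trivial case where B is singular
  by_cases hBd : IsUnit B.det
  case neg =>
    have hQ0 : Q = 0 := by
      rw [hQdef]; exact Matrix.nonsing_inv_apply_not_isUnit B hBd
    rw [hQ0, Matrix.mul_zero]
    rw [infNorm_zero]; linarith
  case pos =>
  have hAd : IsUnit A.det := (Matrix.isUnit_iff_isUnit_det A).mp hinv
  have hPA : P * A = 1 := by rw [hPdef]; exact Matrix.nonsing_inv_mul A hAd
  have hBQ : B * Q = 1 := by rw [hQdef]; exact Matrix.mul_nonsing_inv B hBd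
  -- matrix identities
  have hT : B - A = Asᵀ * Ls + (Lsᵀ * As + Lsᵀ * Ls) := by
    rw [hBdef, hAdef, hYs]
    simp only [Matrix.transpose_add, Matrix.add_mul, Matrix.mul_add]
    abel
  have e1 : Ascᵀ * As * P * ((B - A) * Q) = Ascᵀ * As * P - Ascᵀ * As * Q := by
    rw [Matrix.sub_mul, Matrix.mul_sub, hBQ, Matrix.mul_one,
      ← Matrix.mul_assoc (Ascᵀ * As * P) A Q, Matrix.mul_assoc (Ascᵀ * As) P A, hPA,
      Matrix.mul_one]
  have I1 : Q = P - P * ((B - A) * Q) := by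
    have h1 : P * ((B - A) * Q) = P - Q := by
      rw [Matrix.sub_mul, Matrix.mul_sub, hBQ, Matrix.mul_one,
        ← Matrix.mul_assoc P A Q, hPA, Matrix.one_mul]
    rw [h1]; abel
  have e2 : Yscᵀ * Ys = Ascᵀ * As + (Lscᵀ * Ys + Ascᵀ * Ls) := by
    rw [hYs, hYsc]
    simp only [Matrix.transpose_add, Matrix.add_mul, Matrix.mul_add]
    abel
  have I2 : Yscᵀ * Ys * Q
      = Ascᵀ * As * P + ((Lscᵀ * Ys + Ascᵀ * Ls) * Q - Ascᵀ * As * P * ((B - A) * Q)) := by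
    rw [e1, e2, Matrix.add_mul]
    abel
  -- norm bounds on blocks
  have nAs : infNorm As ≤ UY := by
    rw [hAs, hUY]; exact le_trans (infNorm_colsub_le Ybar S) (le_max_right _ _)
  have nAsT : infNorm Asᵀ ≤ UY := by
    rw [hAs, hUY]; exact le_trans (infNorm_colsub_transpose_le Ybar S) (le_max_left _ _)
  have nAscT : infNorm Ascᵀ ≤ UY := by
    rw [hAsc, hUY]; exact le_trans (infNorm_colsub_transpose_le Ybar Sᶜ) (le_max_left _ _)
  have nLs : infNorm Ls ≤ UL := by
    rw [hLs, hUL]; exact le_trans (infNorm_colsub_le L S) (le_max_right _ _)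
  have nLsT : infNorm Lsᵀ ≤ UL := by
    rw [hLs, hUL]; exact le_trans (infNorm_colsub_transpose_le L S) (le_max_left _ _)
  have nLscT : infNorm Lscᵀ ≤ UL := by
    rw [hLscdef, hUL]; exact le_trans (infNorm_colsub_transpose_le L Sᶜ) (le_max_left _ _)
  have nYs : infNorm Ys ≤ UY + UL := by
    rw [hYs]; exact le_trans (infNorm_add_le _ _) (add_le_add nAs nLs)
  -- norm of the perturbation T := B - A
  set e : ℝ := UL * (2 * UY + UL) with he
  clear_value e
  have he0 : 0 ≤ e := by rw [he]; positivity
  have nT : infNorm (B - A) ≤ e := by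
    rw [hT]
    calc infNorm (Asᵀ * Ls + (Lsᵀ * As + Lsᵀ * Ls))
        ≤ infNorm (Asᵀ * Ls) + (infNorm (Lsᵀ * As) + infNorm (Lsᵀ * Ls)) :=
          le_trans (infNorm_add_le _ _) (by gcongr; exact infNorm_add_le _ _)
      _ ≤ UY * UL + (UL * UY + UL * UL) := by
          gcongr <;> [exact infNorm_mul_le_of_le nAsT nLs;
            exact infNorm_mul_le_of_le nLsT nAs; exact infNorm_mul_le_of_le nLsT nLs]
      _ = e := by rw [he]; ring
  have nE : infNorm (Lscᵀ * Ys + Ascᵀ * Ls) ≤ e := by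
    calc infNorm (Lscᵀ * Ys + Ascᵀ * Ls)
        ≤ infNorm (Lscᵀ * Ys) + infNorm (Ascᵀ * Ls) := infNorm_add_le _ _
      _ ≤ UL * (UY + UL) + UY * UL := by
          gcongr <;> [exact infNorm_mul_le_of_le nLscT nYs;
            exact infNorm_mul_le_of_le nAscT nLs]
      _ = e := by rw [he]; ring
  -- abbreviate the key norms
  set z : ℝ := infNorm (Ascᵀ * As * P) with hz
  set t : ℝ := infNorm (B - A) with ht
  set β : ℝ := infNorm Q with hβdef
  clear_value z t β
  have hz1 : z ≤ 1 - γ := hirr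
  have hz0 : 0 ≤ z := by rw [hz]; exact infNorm_nonneg _
  have ht0 : 0 ≤ t := by rw [ht]; exact infNorm_nonneg _
  have hβ0 : 0 ≤ β := by rw [hβdef]; exact infNorm_nonneg _
  have hdP : infNorm P = Dmax := hD.symm
  -- bound on β from I1
  have hβ : β ≤ Dmax + Dmax * t * β := by
    calc β = infNorm (P - P * ((B - A) * Q)) := by rw [hβdef, ← I1]
      _ ≤ infNorm P + infNorm (P * ((B - A) * Q)) := infNorm_sub_le _ _
      _ ≤ Dmax + Dmax * (t * β) := by
          gcongr
          · exact le_of_eq hdP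
          · exact infNorm_mul_le_of_le (le_of_eq hdP)
              (infNorm_mul_le_of_le ht.ge hβdef.ge)
      _ = Dmax + Dmax * t * β := by ring
  -- c ≥ 1
  have hc1 : 1 ≤ (UY + UL) ^ 2 * Dmax := by
    apply arith_c1 hUL0 hUY0 hd0
    have h1 : (1 : ℝ) = infNorm (1 : Matrix {j // j ∈ S} {j // j ∈ S} ℝ) := infNorm_one.symm
    have h2 : infNorm (1 : Matrix {j // j ∈ S} {j // j ∈ S} ℝ) ≤ Dmax * (UY * UY) := by
      rw [← hPA]
      exact infNorm_mul_le_of_le (le_of_eq hdP)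
        (by rw [hAdef]; exact infNorm_mul_le_of_le nAsT nAs)
    linarith
  -- final assembly
  calc infNorm (Yscᵀ * Ys * Q)
      = infNorm (Ascᵀ * As * P
          + ((Lscᵀ * Ys + Ascᵀ * Ls) * Q - Ascᵀ * As * P * ((B - A) * Q))) := by rw [← I2]
    _ ≤ infNorm (Ascᵀ * As * P)
          + infNorm ((Lscᵀ * Ys + Ascᵀ * Ls) * Q - Ascᵀ * As * P * ((B - A) * Q)) :=
        infNorm_add_le _ _
    _ ≤ z + (infNorm (Lscᵀ * Ys + Ascᵀ * Ls) * β + z * (t * β)) := by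
        have b0 : infNorm ((Lscᵀ * Ys + Ascᵀ * Ls) * Q - Ascᵀ * As * P * ((B - A) * Q))
            ≤ infNorm ((Lscᵀ * Ys + Ascᵀ * Ls) * Q)
              + infNorm (Ascᵀ * As * P * ((B - A) * Q)) := infNorm_sub_le _ _
        have b1 : infNorm ((Lscᵀ * Ys + Ascᵀ * Ls) * Q)
            ≤ infNorm (Lscᵀ * Ys + Ascᵀ * Ls) * β := infNorm_mul_le_of_le le_rfl hβdef.ge
        have b2 : infNorm (Ascᵀ * As * P * ((B - A) * Q)) ≤ z * (t * β) :=
          infNorm_mul_le_of_le hz.ge (infNorm_mul_le_of_le ht.ge hβdef.ge)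
        have b3 : infNorm (Ascᵀ * As * P) = z := hz.symm
        linarith
    _ ≤ 1 - γ / 2 :=
        arith_main γ η Dmax UL UY z t (infNorm (Lscᵀ * Ys + Ascᵀ * Ls)) β e
          hγ0 hγ1 hη0 hη1 hd0 hUL0 hUY0 he hc1 hsmall hz1 hz0 nT ht0
          nE (infNorm_nonneg _) hβ0 hβ
end
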